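/- arXiv:1004.1430 — 2 statements merged into one kernel-verified Lean document; each statement's English description precedes it below -/
import Mathlib

section
/- (Taxicab Lemma) For vertices u=(x,y) and v=(x',y') of the hexagonal grid, if |x−x'| ≥ |y−y'|, then the graph distance d(u,v) equals the taxicab distance |x−x'| + |y−y'|. -/
/-- The hexagonal grid in its brick wall representation: vertex set ℤ×ℤ,
with (x,y) adjacent to (x±1,y) always, and to (x,y+1) if x+y is even
(equivalently, to (x,y-1) if x+y is odd). -/
def hexGraph : SimpleGraph (ℤ × ℤ) where
  Adj u v := (u.2 = v.2 ∧ (u.1 = v.1 + 1 ∨ v.1 = u.1 + 1)) ∨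
    (u.1 = v.1 ∧ ((v.2 = u.2 + 1 ∧ Even (u.1 + u.2)) ∨ (u.2 = v.2 + 1 ∧ Even (v.1 + v.2))))
  symm := by
    constructor; rintro u v (⟨h1, h2 | h2⟩ | ⟨h1, ⟨h2, h3⟩ | ⟨h2, h3⟩⟩)
    · exact Or.inl ⟨h1.symm, Or.inr h2⟩
    · exact Or.inl ⟨h1.symm, Or.inl h2⟩
    · exact Or.inr ⟨h1.symm, Or.inr ⟨h2, h3⟩⟩
    · exact Or.inr ⟨h1.symm, Or.inl ⟨h2, h3⟩⟩
  loopless := by constructor; rintro ⟨x, y⟩ (⟨_, h | h⟩ | ⟨_, ⟨h, _⟩ | ⟨h, _⟩⟩) <;> omega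

/-- The graph distance from a vertex to the horizontal line L_k = {(x,k) : x ∈ ℤ}. -/
noncomputable def hexLineDist (u : ℤ × ℤ) (k : ℤ) : ℕ :=
  sInf {n : ℕ | ∃ x : ℤ, hexGraph.dist u (x, k) = n}

/-!
Every edge changes `|x - x'| + |y - y'|` by exactly one, which gives the lower bound.
Conversely, a horizontal step flips the parity of `x + y`, so from any vertex one of the two
orders "vertical then horizontal" or "horizontal then vertical" is available: every diagonal
neighbour `(x ± 1, y ± 1)` is reached in two steps. Thus `|y - y'|` diagonal moves followed by
`|x - x'| - |y - y'|` horizontal ones realise the taxicab distance.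
-/

namespace SimpleGraph

variable {V : Type*} [AddMonoid V] {G : SimpleGraph V}

theorem exists_walk_add_nsmul {δ : V} {m : ℕ}
    (hstep : ∀ u, ∃ p : G.Walk u (u + δ), p.length = m) (n : ℕ) (u : V) :
    ∃ p : G.Walk u (u + n • δ), p.length = n * m := by
  induction n with
  | zero => exact ⟨Walk.nil.copy rfl (by simp), by simp⟩
  | succ n ih =>
    obtain ⟨p, hp⟩ := ih
    obtain ⟨q, hq⟩ := hstep (u + n • δ)
    exact ⟨(p.append q).copy rfl (by rw [succ_nsmul, add_assoc]), by simp [hp, hq, Nat.succ_mul]⟩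

end SimpleGraph

namespace hexGraph

open SimpleGraph

theorem natAbs_add_natAbs_eq_one_of_adj {u v : ℤ × ℤ} (h : hexGraph.Adj u v) :
    (u.1 - v.1).natAbs + (u.2 - v.2).natAbs = 1 := by
  rcases h with ⟨_, _ | _⟩ | ⟨_, ⟨_, _⟩ | ⟨_, _⟩⟩ <;> omega

theorem natAbs_add_natAbs_le_length {u v : ℤ × ℤ} (p : hexGraph.Walk u v) :
    (u.1 - v.1).natAbs + (u.2 - v.2).natAbs ≤ p.length := by
  induction p with
  | nil => simp
  | cons h _ ih =>
    have := natAbs_add_natAbs_eq_one_of_adj h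
    rw [Walk.length_cons]
    omega

theorem adj_add_horizontal {s : ℤ} (hs : s = 1 ∨ s = -1) (u : ℤ × ℤ) :
    hexGraph.Adj u (u + (s, 0)) :=
  Or.inl ⟨by simp, by simp only [Prod.fst_add]; omega⟩

theorem exists_walk_add_diagonal {s t : ℤ} (hs : s = 1 ∨ s = -1) (ht : t = 1 ∨ t = -1)
    (u : ℤ × ℤ) : ∃ p : hexGraph.Walk u (u + (s, t)), p.length = 2 := by
  have hvert : hexGraph.Adj u (u + (0, t)) ∨ hexGraph.Adj (u + (s, 0)) (u + (s, 0) + (0, t)) := by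
    simp only [hexGraph, Prod.fst_add, Prod.snd_add, Int.even_iff]
    omega
  have hcomm : u + (0, t) + (s, 0) = u + (s, t) ∧ u + (s, 0) + (0, t) = u + (s, t) := by
    constructor <;> ext <;> simp
  rcases hvert with hv | hv
  · exact ⟨(hv.toWalk.concat (adj_add_horizontal hs _)).copy rfl hcomm.1, by simp⟩
  · exact ⟨((adj_add_horizontal hs u).toWalk.concat hv).copy rfl hcomm.2, by simp⟩

theorem exists_walk_of_natAbs_le {u v : ℤ × ℤ}
    (h : (u.2 - v.2).natAbs ≤ (u.1 - v.1).natAbs) :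
    ∃ p : hexGraph.Walk u v, p.length = (u.1 - v.1).natAbs + (u.2 - v.2).natAbs := by
  have sign_mul_natAbs (z : ℤ) : ∃ s : ℤ, (s = 1 ∨ s = -1) ∧ z = s * z.natAbs := by
    rcases Int.natAbs_eq z with hz | hz
    exacts [⟨1, by simp, by omega⟩, ⟨-1, by simp, by omega⟩]
  obtain ⟨s, hs, hsx⟩ := sign_mul_natAbs (v.1 - u.1)
  obtain ⟨t, ht, hty⟩ := sign_mul_natAbs (v.2 - u.2)
  rw [← Int.natAbs_neg, neg_sub] at hsx hty
  set a := (u.1 - v.1).natAbs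
  set b := (u.2 - v.2).natAbs
  obtain ⟨p, hp⟩ := exists_walk_add_nsmul (exists_walk_add_diagonal hs ht) b u
  obtain ⟨q, hq⟩ := exists_walk_add_nsmul (m := 1)
    (fun w ↦ ⟨(adj_add_horizontal hs w).toWalk, rfl⟩) (a - b) (u + b • (s, t))
  have hend : u + b • (s, t) + (a - b) • (s, 0) = v := by
    ext
    · simp only [Prod.fst_add, Prod.smul_mk, nsmul_eq_mul, Nat.cast_sub h]
      linear_combination -hsx
    · simp only [Prod.snd_add, Prod.smul_mk, nsmul_eq_mul, smul_zero]
      linear_combination -hty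
  exact ⟨(p.append q).copy rfl hend, by simp [hp, hq]; omega⟩

theorem dist_eq_natAbs_add_natAbs {u v : ℤ × ℤ} (h : (u.2 - v.2).natAbs ≤ (u.1 - v.1).natAbs) :
    hexGraph.dist u v = (u.1 - v.1).natAbs + (u.2 - v.2).natAbs := by
  obtain ⟨p, hp⟩ := exists_walk_of_natAbs_le h
  obtain ⟨q, hq⟩ := Reachable.exists_walk_length_eq_dist ⟨p⟩
  exact le_antisymm (hp ▸ dist_le p) (hq ▸ natAbs_add_natAbs_le_length q)

end hexGraph

/-- Taxicab Lemma: if the horizontal separation is at least the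
vertical separation, the hex-grid distance equals the taxicab distance. -/
theorem hex_taxicab (x y x' y' : ℤ) (h : |x - x'| ≥ |y - y'|) :
    (hexGraph.dist (x, y) (x', y') : ℤ) = |x - x'| + |y - y'| := by
  rw [Int.abs_eq_natAbs, Int.abs_eq_natAbs] at h ⊢
  rw [hexGraph.dist_eq_natAbs_add_natAbs (by exact_mod_cast h)]
  push_cast
  rfl
end

section
/- Let r ≥ 3 be odd and let S = {x ∈ ℤ : x mod (3r−1) ∉ {1,3,5,…,r−1}}. Then any two integers x, y not in S satisfy |x−y| < r or |x−y| ≥ 2r+2, and for every integer x at least one of x, x+2, …, x+2⌈(r+1)/2⌉ belongs to S. -/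
/-!
Write `m = 3r - 1`. The integers outside `S` are those whose residue mod `m` is odd and below
the odd number `r`, i.e. lies in `[1, r - 2]`. Two residues in an interval of length `r - 3`
give `|x - y| ≤ r - 3` inside one period and `|x - y| ≥ m - (r - 3) = 2r + 2` across periods.
For the covering statement, an odd residue `a < r` is moved to exactly `r ∉ [1, r - 2]` by
adding `r - a`, an even number at most `r - 1`.
-/

namespace Int

theorem abs_sub_le_or_le_abs_sub_of_emod_mem_Icc {m a b x y : ℤ}
    (hx : x % m ∈ Set.Icc a b) (hy : y % m ∈ Set.Icc a b) :
    |x - y| ≤ b - a ∨ m - (b - a) ≤ |x - y| := by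
  obtain ⟨hax, hxb⟩ := hx
  obtain ⟨hay, hyb⟩ := hy
  have hδ : |x % m - y % m| ≤ b - a := abs_sub_le_iff.mpr ⟨by linarith, by linarith⟩
  by_contra! h
  -- `x - y` and the residue difference differ by a multiple of `m` smaller than `m`.
  have hdvd : m ∣ (x - y) - (x % m - y % m) :=
    ((mod_modEq x m).sub (mod_modEq y m)).dvd
  have hsmall : |(x - y) - (x % m - y % m)| < m :=
    (abs_sub _ _).trans_lt (by linarith)
  have heq : x - y = x % m - y % m := sub_eq_zero.mp (eq_zero_of_abs_lt_dvd hdvd hsmall)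
  exact absurd (heq ▸ hδ) (not_le.mpr h.1)

theorem emod_mem_Icc_of_odd_of_lt {m r x : ℤ} (hm : m ≠ 0) (hro : Odd r)
    (hodd : Odd (x % m)) (hlt : x % m < r) : x % m ∈ Set.Icc 1 (r - 2) := by
  have hnonneg : 0 ≤ x % m := emod_nonneg x hm
  obtain ⟨s, rfl⟩ := hro
  obtain ⟨t, ht⟩ := hodd
  constructor <;> omega

theorem add_sub_emod_emod (x c m : ℤ) : (x + (c - x % m)) % m = c % m := by
  have h : x + (c - x % m) = c + m * (x / m) := by
    have := mul_ediv_add_emod x m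
    linarith
  rw [h, add_mul_emod_self_left]

theorem exists_not_odd_and_emod_lt_add_two_mul {m r : ℤ} (hr : 0 ≤ r) (hro : Odd r)
    (hrm : r < m) (x : ℤ) :
    ∃ j : ℤ, 0 ≤ j ∧ j ≤ r / 2 ∧ ¬ (Odd ((x + 2 * j) % m) ∧ (x + 2 * j) % m < r) := by
  by_cases hx : Odd (x % m) ∧ x % m < r
  · obtain ⟨⟨t, ht⟩, hlt⟩ := hx
    obtain ⟨s, hs⟩ := hro
    have hnonneg : 0 ≤ x % m := emod_nonneg x (by omega)
    have hstep : 2 * ((r - x % m) / 2) = r - x % m := by omega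
    refine ⟨(r - x % m) / 2, by omega, by omega, ?_⟩
    rw [hstep, add_sub_emod_emod, emod_eq_of_lt hr hrm]
    exact fun h ↦ lt_irrefl r h.2
  · exact ⟨0, le_rfl, by omega, by simpa using hx⟩

end Int

/-- for odd r ≥ 3, with S = {x : x mod (3r−1) ∉ {1,3,…,r−1}},
any two integers outside S differ by < r or ≥ 2r+2, and every arithmetic progression
x, x+2, …, x+2⌈(r+1)/2⌉ meets S.  (Here ⌈(r+1)/2⌉ = (r+2)/2 in integer division.) -/
theorem codeword_row_odd (r : ℤ) (hr : 3 ≤ r) (hro : Odd r) :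
    (∀ x y : ℤ,
      (Odd (x % (3 * r - 1)) ∧ x % (3 * r - 1) < r) →
      (Odd (y % (3 * r - 1)) ∧ y % (3 * r - 1) < r) →
      |x - y| < r ∨ 2 * r + 2 ≤ |x - y|) ∧
    (∀ x : ℤ, ∃ j : ℤ, 0 ≤ j ∧ j ≤ (r + 2) / 2 ∧
      ¬ (Odd ((x + 2 * j) % (3 * r - 1)) ∧ (x + 2 * j) % (3 * r - 1) < r)) := by
  have hm : 3 * r - 1 ≠ 0 := by omega
  constructor
  · rintro x y ⟨hxodd, hxlt⟩ ⟨hyodd, hylt⟩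
    rcases Int.abs_sub_le_or_le_abs_sub_of_emod_mem_Icc
        (Int.emod_mem_Icc_of_odd_of_lt hm hro hxodd hxlt)
        (Int.emod_mem_Icc_of_odd_of_lt hm hro hyodd hylt) with h | h
    · exact Or.inl (by linarith)
    · exact Or.inr (by linarith)
  · intro x
    obtain ⟨j, hj0, hj, hjx⟩ := Int.exists_not_odd_and_emod_lt_add_two_mul (m := 3 * r - 1)
      (by omega) hro (by omega) x
    exact ⟨j, hj0, hj.trans (by omega), hjx⟩
end
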